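/- Let u, v : [0,∞) × ℝ^N → ℝ with u − v ∈ L^∞([0,T]; ℬ¹(ℝ^N)), and suppose that for some L > 0 and every R > 0, t₀ < t₁ in a full-measure set F ⊆ (0,T), and for every k > 1, I_R(t₁) ≤ I_R(t₀) + (err₁(R) + err₂(R)) + C ∫_{t₀}^{t₁} I_{kR}(t) dt where I_R(t) = R^{-N} ∫ |u(t,x)−v(t,x)| g(x/R) dx with cutoff g equal to 1 on C₁ and 0 outside C_k, and err₁(R), err₂(R) → 0 as R → ∞ with bounds of order R^{-1} and R^{-2} times k^N times the averaged L¹-mean of |u−v| over C_{kR}. Then N₁(u(t₁,·)−v(t₁,·)) ≤ k^N e^{C k^N (t₁−t₀)} N₁(u(t₀,·)−v(t₀,·)) for all t₀ < t₁ in F, and letting k → 1⁺ yields N₁(u(t₁,·)−v(t₁,·)) ≤ C(T) N₁(u(t₀,·)−v(t₀,·)) with C(T) = e^{C(t₁−t₀)}. -/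

import Mathlib

open MeasureTheory Filter
open scoped ENNReal

/-- Reverse Fatou lemma for uniformly bounded real functions on a finite measure space. -/
lemma rev_fatou_aux {μ : Measure ℝ} [IsFiniteMeasure μ]
    {g : ℕ → ℝ → ℝ} {ψ : ℝ → ℝ} {B : ℝ}
    (hg : ∀ n, Measurable (g n)) (hψ : Measurable ψ)
    (hgB : ∀ n t, |g n t| ≤ B) (hψB : ∀ᵐ t ∂μ, |ψ t| ≤ B)
    (hle : ∀ t, Filter.limsup (fun n => g n t) Filter.atTop ≤ ψ t) :
    Filter.limsup (fun n => ∫ t, g n t ∂μ) Filter.atTop ≤ ∫ t, ψ t ∂μ := by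
  have hB0 : 0 ≤ B := (abs_nonneg _).trans (hgB 0 0)
  set G : ℕ → ℝ → ℝ≥0∞ := fun n t => ENNReal.ofReal (g n t + B) with hG
  have Gmeas : ∀ n, Measurable (G n) :=
    fun n => ENNReal.measurable_ofReal.comp ((hg n).add measurable_const)
  have hbound : ∀ n, G n ≤ᵐ[μ] fun _ => ENNReal.ofReal (2 * B) := by
    intro n
    refine ae_of_all _ fun t => ENNReal.ofReal_le_ofReal ?_
    have := (abs_le.1 (hgB n t)).2; linarith
  have hfin : (∫⁻ _, ENNReal.ofReal (2 * B) ∂μ) ≠ ⊤ := by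
    rw [lintegral_const]
    exact ENNReal.mul_ne_top ENNReal.ofReal_ne_top (measure_ne_top μ _)
  have key := limsup_lintegral_le (μ := μ) (f := G) _ Gmeas hbound hfin
  have mono_ofReal : Monotone ENNReal.ofReal := fun _ _ h => ENNReal.ofReal_le_ofReal h
  have pointwise : ∀ t, Filter.limsup (fun n => G n t) atTop ≤ ENNReal.ofReal (ψ t + B) := by
    intro t
    have hbdd : IsBoundedUnder (· ≤ ·) atTop (fun n => g n t + B) :=
      isBoundedUnder_of ⟨2 * B, fun n => by have := (abs_le.1 (hgB n t)).2; linarith⟩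
    have hbddg : IsBoundedUnder (· ≤ ·) atTop (fun n => g n t) :=
      isBoundedUnder_of ⟨B, fun n => (abs_le.1 (hgB n t)).2⟩
    have hcb : IsCoboundedUnder (· ≤ ·) atTop (fun n => g n t + B) :=
      IsBoundedUnder.isCoboundedUnder_le
        (isBoundedUnder_of ⟨0, fun n => by have := (abs_le.1 (hgB n t)).1; linarith⟩)
    have hcbg : IsCoboundedUnder (· ≤ ·) atTop (fun n => g n t) :=
      IsBoundedUnder.isCoboundedUnder_le
        (isBoundedUnder_of ⟨-B, fun n => (abs_le.1 (hgB n t)).1⟩)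
    have hmap := mono_ofReal.map_limsup_of_continuousAt (F := atTop) (fun n => g n t + B)
      ENNReal.continuous_ofReal.continuousAt hbdd hcb
    have heq : (fun n => G n t) = (ENNReal.ofReal ∘ fun n => g n t + B) := rfl
    rw [heq, ← hmap]
    apply ENNReal.ofReal_le_ofReal
    rw [limsup_add_const atTop (fun n => g n t) B hbddg hcbg]
    exact add_le_add_left (hle t) B
  have hfin2 : (∫⁻ t, ENNReal.ofReal (ψ t + B) ∂μ) ≠ ⊤ := by
    refine ne_top_of_le_ne_top hfin (lintegral_mono_ae ?_)
    filter_upwards [hψB] with t ht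
    exact ENNReal.ofReal_le_ofReal (by have := (abs_le.1 ht).2; linarith)
  have hgint : ∀ n, Integrable (g n) μ := fun n =>
    ⟨(hg n).aestronglyMeasurable,
      HasFiniteIntegral.of_bounded (C := B) (ae_of_all _ fun t => by simpa using hgB n t)⟩
  have hψint : Integrable ψ μ :=
    ⟨hψ.aestronglyMeasurable,
      HasFiniteIntegral.of_bounded (C := B) (by simpa using hψB)⟩
  have hrepr : ∀ n, (∫⁻ t, G n t ∂μ).toReal = (∫ t, g n t ∂μ) + B * (μ Set.univ).toReal := by
    intro n
    have h1 : ∫ t, (g n t + B) ∂μ = (∫⁻ t, G n t ∂μ).toReal := by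
      rw [integral_eq_lintegral_of_nonneg_ae (f := fun t => g n t + B)
        (ae_of_all _ fun t => by simp only [Pi.zero_apply]; have := (abs_le.1 (hgB n t)).1; linarith)
        (((hg n).add measurable_const).aestronglyMeasurable)]
    have h2 : ∫ t, (g n t + B) ∂μ = (∫ t, g n t ∂μ) + B * (μ Set.univ).toReal := by
      rw [integral_add (hgint n) (integrable_const B), integral_const]
      simp [mul_comm]
      exact Or.inl rfl
    rw [← h1, h2]
  have hψrepr : (∫⁻ t, ENNReal.ofReal (ψ t + B) ∂μ).toReal
      = (∫ t, ψ t ∂μ) + B * (μ Set.univ).toReal := by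
    have h1 : ∫ t, (ψ t + B) ∂μ = (∫⁻ t, ENNReal.ofReal (ψ t + B) ∂μ).toReal := by
      rw [integral_eq_lintegral_of_nonneg_ae (f := fun t => ψ t + B)
        (hψB.mono fun t ht => by simp only [Pi.zero_apply]; have := (abs_le.1 ht).1; linarith)
        ((hψ.add measurable_const).aestronglyMeasurable)]
    have h2 : ∫ t, (ψ t + B) ∂μ = (∫ t, ψ t ∂μ) + B * (μ Set.univ).toReal := by
      rw [integral_add hψint (integrable_const B), integral_const]
      simp [mul_comm]
      exact Or.inl rfl
    rw [← h1, h2]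
  -- bound lintegrals
  have hGle : ∀ n, (∫⁻ t, G n t ∂μ) ≤ ENNReal.ofReal (2 * B) * μ Set.univ := fun n => by
    calc (∫⁻ t, G n t ∂μ) ≤ ∫⁻ _, ENNReal.ofReal (2 * B) ∂μ := lintegral_mono_ae (hbound n)
    _ = ENNReal.ofReal (2 * B) * μ Set.univ := by rw [lintegral_const]
  have hbig : ENNReal.ofReal (2 * B) * μ Set.univ ≠ ⊤ :=
    ENNReal.mul_ne_top ENNReal.ofReal_ne_top (measure_ne_top μ _)
  have htoReal : Filter.limsup (fun n => (∫⁻ t, G n t ∂μ).toReal) atTop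
      = (Filter.limsup (fun n => ∫⁻ t, G n t ∂μ) atTop).toReal :=
    ENNReal.limsup_toReal_eq hbig (Eventually.of_forall hGle)
  have hlim2 : (Filter.limsup (fun n => ∫⁻ t, G n t ∂μ) atTop).toReal
      ≤ (∫⁻ t, ENNReal.ofReal (ψ t + B) ∂μ).toReal := by
    apply ENNReal.toReal_mono hfin2
    exact key.trans (lintegral_mono fun t => pointwise t)
  -- final computation
  have hfun : (fun n => ∫ t, g n t ∂μ)
      = fun n => (∫⁻ t, G n t ∂μ).toReal - B * (μ Set.univ).toReal := by
    funext n; rw [hrepr n]; ring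
  rw [hfun]
  have hbdd2 : IsBoundedUnder (· ≤ ·) atTop (fun n => (∫⁻ t, G n t ∂μ).toReal) :=
    isBoundedUnder_of ⟨(ENNReal.ofReal (2 * B) * μ Set.univ).toReal,
      fun n => ENNReal.toReal_mono hbig (hGle n)⟩
  have hcb2 : IsCoboundedUnder (· ≤ ·) atTop (fun n => (∫⁻ t, G n t ∂μ).toReal) :=
    IsBoundedUnder.isCoboundedUnder_le
      (isBoundedUnder_of ⟨0, fun n => ENNReal.toReal_nonneg⟩)
  rw [limsup_sub_const atTop _ _ hbdd2 hcb2, htoReal]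
  have := hlim2.trans_eq hψrepr
  linarith

lemma gronwall_iterate_aux (M : ℝ → ℝ) (hMmeas : Measurable M) (hMnn : ∀ t, 0 ≤ M t)
    (t₀ t₁ B a b : ℝ) (h01 : t₀ < t₁)
    (hB : ∀ t ∈ Set.Ioc t₀ t₁, M t ≤ B)
    (ha : 0 ≤ a) (hb : 0 ≤ b)
    (S : Set ℝ) (hS : volume (Set.Ioc t₀ t₁ \ S) = 0)
    (key : ∀ t ∈ S ∩ Set.Ioc t₀ t₁, M t ≤ a + b * ∫ τ in t₀..t, M τ)
    (ht₁ : t₁ ∈ S) :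
    M t₁ ≤ a * Real.exp (b * (t₁ - t₀)) := by
  have hB0 : 0 ≤ B := (hMnn t₁).trans (hB t₁ ⟨h01, le_refl _⟩)
  have hMint : ∀ t, t₀ ≤ t → t ≤ t₁ → IntervalIntegrable M volume t₀ t := by
    intro t h h'
    rw [intervalIntegrable_iff_integrableOn_Ioc_of_le h]
    apply Measure.integrableOn_of_bounded (M := B) measure_Ioc_lt_top.ne
      hMmeas.aestronglyMeasurable
    refine (ae_restrict_iff' measurableSet_Ioc).2 (ae_of_all _ fun τ hτ => ?_)
    rw [Real.norm_eq_abs, abs_of_nonneg (hMnn τ)]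
    exact hB τ ⟨hτ.1, hτ.2.trans h'⟩
  have hpow : ∀ (t : ℝ) (j : ℕ), ∫ τ in t₀..t, (τ - t₀) ^ j
      = (t - t₀) ^ (j + 1) / ((j : ℝ) + 1) := by
    intro t j
    rw [intervalIntegral.integral_comp_sub_right (fun u => u ^ j) t₀, sub_self,
      integral_pow, zero_pow (Nat.succ_ne_zero j), sub_zero]
  have hI : ∀ (t : ℝ) (j : ℕ), ∫ τ in t₀..t, (b * (τ - t₀)) ^ j / (j.factorial : ℝ)
      = b ^ j * (t - t₀) ^ (j + 1) / ((j + 1).factorial : ℝ) := by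
    intro t j
    have h1 : (fun τ => (b * (τ - t₀)) ^ j / (j.factorial : ℝ))
        = fun τ => (b ^ j / (j.factorial : ℝ)) * (τ - t₀) ^ j := by
      funext τ; rw [mul_pow]; ring
    have hfac : (((j + 1).factorial : ℝ)) = ((j : ℝ) + 1) * (j.factorial : ℝ) := by
      rw [Nat.factorial_succ]; push_cast; ring
    rw [h1, intervalIntegral.integral_const_mul, hpow t j, hfac, div_mul_div_comm,
      mul_comm ((j.factorial : ℝ)) ((j : ℝ) + 1)]
  have main : ∀ n : ℕ, ∀ t ∈ S ∩ Set.Ioc t₀ t₁,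
      M t ≤ a * (∑ j ∈ Finset.range n, (b * (t - t₀)) ^ j / (j.factorial : ℝ))
        + B * ((b * (t - t₀)) ^ n / (n.factorial : ℝ)) := by
    intro n
    induction n with
    | zero =>
      rintro t ⟨-, ht⟩
      simpa using hB t ht
    | succ n ih =>
      rintro t ⟨htS, ht⟩
      have h1 : M t ≤ a + b * ∫ τ in t₀..t, M τ := key t ⟨htS, ht⟩
      set P : ℝ → ℝ := fun τ =>
        a * (∑ j ∈ Finset.range n, (b * (τ - t₀)) ^ j / (j.factorial : ℝ))
          + B * ((b * (τ - t₀)) ^ n / (n.factorial : ℝ)) with hP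
      have hPcont : Continuous P := by fun_prop
      have hint2 : IntervalIntegrable P volume t₀ t := hPcont.intervalIntegrable _ _
      -- a.e. bound M ≤ P on Icc t₀ t
      have hmono : M ≤ᵐ[volume.restrict (Set.Icc t₀ t)] P := by
        refine (ae_restrict_iff' measurableSet_Icc).2 ?_
        have h0 : ∀ᵐ τ : ℝ, τ ∉ Set.Ioc t₀ t₁ \ S :=
          (measure_eq_zero_iff_ae_notMem (μ := volume)).1 hS
        have h0' : ∀ᵐ τ : ℝ, τ ≠ t₀ :=
          (measure_eq_zero_iff_ae_notMem (μ := volume)).1 Real.volume_singleton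
        filter_upwards [h0, h0'] with τ hτ1 hτ2 hτIcc
        have hτIoc : τ ∈ Set.Ioc t₀ t :=
          ⟨lt_of_le_of_ne hτIcc.1 (Ne.symm hτ2), hτIcc.2⟩
        have hτS : τ ∈ S := by
          by_contra hc
          exact hτ1 ⟨⟨hτIoc.1, hτIoc.2.trans ht.2⟩, hc⟩
        exact ih τ ⟨hτS, ⟨hτIoc.1, hτIoc.2.trans ht.2⟩⟩
      have h2 : (∫ τ in t₀..t, M τ) ≤ ∫ τ in t₀..t, P τ :=
        intervalIntegral.integral_mono_ae_restrict ht.1.le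
          (hMint t ht.1.le ht.2) hint2 hmono
      -- compute ∫ P
      have hPint : (∫ τ in t₀..t, P τ)
          = a * (∑ j ∈ Finset.range n, b ^ j * (t - t₀) ^ (j + 1) / ((j + 1).factorial : ℝ))
            + B * (b ^ n * (t - t₀) ^ (n + 1) / ((n + 1).factorial : ℝ)) := by
        rw [hP]
        have hc1 : Continuous fun τ : ℝ =>
            (∑ j ∈ Finset.range n, (b * (τ - t₀)) ^ j / (j.factorial : ℝ)) := by fun_prop
        have hc2 : Continuous fun τ : ℝ => (b * (τ - t₀)) ^ n / (n.factorial : ℝ) := by fun_prop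
        rw [intervalIntegral.integral_add
          (f := fun τ => a * ∑ j ∈ Finset.range n, (b * (τ - t₀)) ^ j / (j.factorial : ℝ))
          (g := fun τ => B * ((b * (τ - t₀)) ^ n / (n.factorial : ℝ)))
          (((continuous_const.mul hc1)).intervalIntegrable _ _)
          (((continuous_const.mul hc2)).intervalIntegrable _ _),
          intervalIntegral.integral_const_mul, intervalIntegral.integral_const_mul,
          intervalIntegral.integral_finset_sum
            (fun j _ => ((by fun_prop : Continuous fun τ : ℝ =>
              (b * (τ - t₀)) ^ j / (j.factorial : ℝ))).intervalIntegrable _ _),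
          hI t n]
        congr 1
        congr 1
        exact Finset.sum_congr rfl fun j _ => hI t j
      -- assemble
      have h3 : M t ≤ a + b * ((∫ τ in t₀..t, P τ)) := by
        have := mul_le_mul_of_nonneg_left h2 hb
        linarith
      rw [hPint] at h3
      have halg : a + b * (a * (∑ j ∈ Finset.range n,
            b ^ j * (t - t₀) ^ (j + 1) / ((j + 1).factorial : ℝ))
          + B * (b ^ n * (t - t₀) ^ (n + 1) / ((n + 1).factorial : ℝ)))
          = a * (∑ j ∈ Finset.range (n + 1), (b * (t - t₀)) ^ j / (j.factorial : ℝ))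
            + B * ((b * (t - t₀)) ^ (n + 1) / ((n + 1).factorial : ℝ)) := by
        rw [Finset.sum_range_succ']
        simp only [pow_zero, Nat.factorial_zero, Nat.cast_one]
        have hterm : ∀ j ∈ Finset.range n,
            (b * (t - t₀)) ^ (j + 1) / (((j + 1).factorial : ℝ))
            = b * (b ^ j * (t - t₀) ^ (j + 1) / ((j + 1).factorial : ℝ)) := by
          intro j _
          rw [mul_pow]
          ring
        rw [Finset.sum_congr rfl hterm, ← Finset.mul_sum]
        rw [mul_pow]
        ring
      linarith [halg ▸ h3]
  -- pass to the limit
  have hseq : ∀ n : ℕ,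
      M t₁ ≤ a * (∑ j ∈ Finset.range n, (b * (t₁ - t₀)) ^ j / (j.factorial : ℝ))
        + B * ((b * (t₁ - t₀)) ^ n / (n.factorial : ℝ)) :=
    fun n => main n t₁ ⟨ht₁, ⟨h01, le_refl _⟩⟩
  have hexp : HasSum (fun j : ℕ => (b * (t₁ - t₀)) ^ j / (j.factorial : ℝ))
      (Real.exp (b * (t₁ - t₀))) := by
    rw [Real.exp_eq_exp_ℝ]
    exact NormedSpace.expSeries_div_hasSum_exp (b * (t₁ - t₀))
  have htend : Tendsto (fun n : ℕ =>
      a * (∑ j ∈ Finset.range n, (b * (t₁ - t₀)) ^ j / (j.factorial : ℝ))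
        + B * ((b * (t₁ - t₀)) ^ n / (n.factorial : ℝ))) atTop
      (nhds (a * Real.exp (b * (t₁ - t₀)) + B * 0)) :=
    (hexp.tendsto_sum_nat.const_mul a).add
      ((FloorSemiring.tendsto_pow_div_factorial_atTop (b * (t₁ - t₀))).const_mul B)
  have := ge_of_tendsto' htend hseq
  simpa using this
/-- the Grönwall-type argument behind the `L¹`-mean semi-contraction.
Here `M t` stands for `N₁(u(t,·)−v(t,·))`, `I k R t` for the localized averages
`I_R(t) = R^{-N}∫|u−v| g(x/R)` (with cutoff parameter `k`), and `err₁, err₂` for the flux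
and viscosity error terms, which vanish as `R → ∞`. From the approximate monotonicity
inequality and the sandwich `M t ≤ limsup_R I k R t ≤ k^N M t`, one gets
`M t₁ ≤ k^N e^{C k^N (t₁−t₀)} M t₀` for every `k > 1`, and letting `k → 1⁺`,
`M t₁ ≤ e^{C (t₁−t₀)} M t₀`. -/
theorem l1_mean_semicontraction_gronwall (Nd : ℕ) (T C : ℝ) (hT : 0 < T) (hC : 0 < C)
    (F : Set ℝ) (hF : F ⊆ Set.Ioo 0 T) (hFfull : volume (Set.Ioo 0 T \ F) = 0)
    (I : ℝ → ℝ → ℝ → ℝ) (err₁ err₂ : ℝ → ℝ → ℝ) (M : ℝ → ℝ)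
    (hMnn : ∀ t, 0 ≤ M t)
    (hMbdd : ∃ B : ℝ, ∀ t ∈ Set.Ioo 0 T, M t ≤ B)
    (hMmeas : Measurable M)
    (hImeas : ∀ k R, Measurable (I k R))
    (hIbdd : ∃ B : ℝ, ∀ k R t, |I k R t| ≤ B)
    (hmain : ∀ k > (1 : ℝ), ∀ R > (0 : ℝ), ∀ t₀ ∈ F, ∀ t₁ ∈ F, t₀ < t₁ →
      I k R t₁ ≤ I k R t₀ + (err₁ k R + err₂ k R) + C * ∫ t in t₀..t₁, I k (k * R) t)
    (herr₁ : ∀ k > (1 : ℝ), Tendsto (err₁ k) atTop (nhds 0))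
    (herr₂ : ∀ k > (1 : ℝ), Tendsto (err₂ k) atTop (nhds 0))
    (hsandwich : ∀ k > (1 : ℝ), ∀ t,
      M t ≤ Filter.limsup (fun R => I k R t) atTop ∧
      Filter.limsup (fun R => I k R t) atTop ≤ k ^ Nd * M t) :
    ∀ t₀ ∈ F, ∀ t₁ ∈ F, t₀ < t₁ →
      (∀ k > (1 : ℝ), M t₁ ≤ k ^ Nd * Real.exp (C * k ^ Nd * (t₁ - t₀)) * M t₀) ∧
      M t₁ ≤ Real.exp (C * (t₁ - t₀)) * M t₀ := by
  intro t₀ ht₀ t₁ ht₁ hlt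
  obtain ⟨B₀, hB₀⟩ := hIbdd
  obtain ⟨B₁, hB₁⟩ := hMbdd
  have hB₀0 : 0 ≤ B₀ := (abs_nonneg _).trans (hB₀ 1 1 1)
  have hB₁0 : 0 ≤ B₁ := (hMnn t₀).trans (hB₁ t₀ (hF ht₀))
  have part1 : ∀ k > (1 : ℝ), M t₁ ≤ k ^ Nd * Real.exp (C * k ^ Nd * (t₁ - t₀)) * M t₀ := by
    intro k hk
    have hk0 : (0 : ℝ) < k := lt_trans one_pos hk
    set A : ℝ := k ^ Nd with hA
    have hA0 : 0 < A := pow_pos hk0 _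
    -- KEY STEP: approximate integral inequality for M
    have key : ∀ s ∈ F, ∀ t ∈ F, s < t →
        M t ≤ A * M s + (C * A) * ∫ τ in s..t, M τ := by
      intro s hsF t htF hst
      set φ : ℝ → ℝ := fun R => ∫ τ in s..t, I k (k * R) τ with hφ
      have hφbd : ∀ R, |φ R| ≤ B₀ * (t - s) := by
        intro R
        have h := intervalIntegral.norm_integral_le_of_norm_le_const
          (f := I k (k * R)) (a := s) (b := t) (C := B₀)
          (fun x _ => by simpa [Real.norm_eq_abs] using hB₀ k (k * R) x)
        rw [Real.norm_eq_abs, abs_of_pos (sub_pos.2 hst)] at h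
        exact h
      set L : ℝ := limsup φ atTop with hL
      have hφbdd : IsBoundedUnder (· ≤ ·) atTop φ :=
        isBoundedUnder_of ⟨B₀ * (t - s), fun R => (abs_le.1 (hφbd R)).2⟩
      have hφcb : IsCoboundedUnder (· ≤ ·) atTop φ :=
        IsBoundedUnder.isCoboundedUnder_le
          (isBoundedUnder_of ⟨-(B₀ * (t - s)), fun R => (abs_le.1 (hφbd R)).1⟩)
      -- Step A : M t ≤ A * M s + C * L
      have stepA : M t ≤ A * M s + C * L := by
        have hA' : ∀ ε > (0 : ℝ), M t ≤ A * M s + C * L + (1 + C) * ε := by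
          intro ε hε
          have herr : Tendsto (fun R => err₁ k R + err₂ k R) atTop (nhds 0) := by
            simpa using (herr₁ k hk).add (herr₂ k hk)
          have h1 : ∀ᶠ R in atTop, err₁ k R + err₂ k R ≤ ε :=
            herr.eventually (eventually_le_nhds hε)
          have h2 : ∀ᶠ R in atTop, φ R ≤ L + ε := by
            have hlt' : limsup φ atTop < L + ε := lt_add_of_pos_right _ hε
            exact (eventually_lt_of_limsup_lt hlt' hφbdd).mono fun R h => h.le
          have h3 : ∀ᶠ R in atTop, I k R t ≤ I k R s + (ε + C * (L + ε)) := by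
            filter_upwards [h1, h2, eventually_gt_atTop (0 : ℝ)] with R hR1 hR2 hR0
            have hm := hmain k hk R hR0 s hsF t htF hst
            have hCφ : C * φ R ≤ C * (L + ε) := mul_le_mul_of_nonneg_left hR2 hC.le
            have : C * (∫ τ in s..t, I k (k * R) τ) = C * φ R := rfl
            linarith [hm, hCφ, this ▸ hm]
          have h4 : M t ≤ limsup (fun R => I k R t) atTop := (hsandwich k hk t).1
          have hIt_cobdd : IsCoboundedUnder (· ≤ ·) atTop (fun R => I k R t) :=
            IsBoundedUnder.isCoboundedUnder_le
              (isBoundedUnder_of ⟨-B₀, fun R => (abs_le.1 (hB₀ k R t)).1⟩)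
          have hIs_bdd : IsBoundedUnder (· ≤ ·) atTop (fun R => I k R s) :=
            isBoundedUnder_of ⟨B₀, fun R => (abs_le.1 (hB₀ k R s)).2⟩
          have hIs_cb : IsCoboundedUnder (· ≤ ·) atTop (fun R => I k R s) :=
            IsBoundedUnder.isCoboundedUnder_le
              (isBoundedUnder_of ⟨-B₀, fun R => (abs_le.1 (hB₀ k R s)).1⟩)
          have h5 : limsup (fun R => I k R t) atTop
              ≤ limsup (fun R => I k R s + (ε + C * (L + ε))) atTop :=
            limsup_le_limsup h3 hIt_cobdd
              (isBoundedUnder_of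
                ⟨B₀ + (ε + C * (L + ε)),
                  fun R => add_le_add_left (abs_le.1 (hB₀ k R s)).2 _⟩)
          have h6 : limsup (fun R => I k R s + (ε + C * (L + ε))) atTop
              = limsup (fun R => I k R s) atTop + (ε + C * (L + ε)) :=
            limsup_add_const atTop _ _ hIs_bdd hIs_cb
          have h7 : limsup (fun R => I k R s) atTop ≤ A * M s := (hsandwich k hk s).2
          nlinarith [h4, h5, h6 ▸ h5, h7, hC.le]
        by_contra hcon
        push_neg at hcon
        set δ := M t - (A * M s + C * L) with hδdef
        have hδ : 0 < δ := sub_pos.2 hcon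
        have h1C : (0 : ℝ) < 1 + C := by linarith
        have := hA' (δ / (2 * (1 + C))) (by positivity)
        have heq : (1 + C) * (δ / (2 * (1 + C))) = δ / 2 := by field_simp
        rw [heq] at this
        linarith
      -- Step B : L ≤ ∫ τ in s..t, A * M τ
      have stepB : L ≤ ∫ τ in s..t, A * M τ := by
        have hfreq : ∀ n : ℕ, ∃ R, ((n : ℝ) + 1) ≤ R ∧ L - 1 / ((n : ℝ) + 1) < φ R := by
          intro n
          have hpos : (0 : ℝ) < 1 / ((n : ℝ) + 1) := by positivity
          have hlt' : L - 1 / ((n : ℝ) + 1) < limsup φ atTop := by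
            rw [← hL]; linarith
          obtain ⟨R, hR1, hR2⟩ :=
            ((frequently_lt_of_lt_limsup hφcb hlt').and_eventually
              (eventually_ge_atTop ((n : ℝ) + 1))).exists
          exact ⟨R, hR2, hR1⟩
        choose R hR1 hR2 using hfreq
        have hRtop : Tendsto R atTop atTop :=
          tendsto_atTop_mono (fun n => le_trans (by linarith [Nat.cast_nonneg (α := ℝ) n] :
            (n : ℝ) ≤ (n : ℝ) + 1) (hR1 n)) tendsto_natCast_atTop_atTop
        have hkRtop : Tendsto (fun n => k * R n) atTop atTop := hRtop.const_mul_atTop hk0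
        set μ := volume.restrict (Set.Ioc s t) with hμ
        haveI : IsFiniteMeasure μ :=
          ⟨by rw [hμ, Measure.restrict_apply_univ]; exact measure_Ioc_lt_top⟩
        set g : ℕ → ℝ → ℝ := fun n τ => I k (k * R n) τ with hg
        set B' : ℝ := max B₀ (A * B₁) with hB'
        have hgB : ∀ n τ, |g n τ| ≤ B' := fun n τ => (hB₀ k (k * R n) τ).trans (le_max_left _ _)
        have hsubset : Set.Ioc s t ⊆ Set.Ioo 0 T := fun x hx =>
          ⟨(hF hsF).1.trans hx.1, lt_of_le_of_lt hx.2 (hF htF).2⟩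
        have hψB : ∀ᵐ τ ∂μ, |A * M τ| ≤ B' := by
          rw [hμ]
          refine (ae_restrict_iff' measurableSet_Ioc).2 (ae_of_all _ fun τ hτ => ?_)
          rw [abs_of_nonneg (mul_nonneg hA0.le (hMnn τ))]
          exact le_trans (mul_le_mul_of_nonneg_left (hB₁ τ (hsubset hτ)) hA0.le)
            (le_max_right _ _)
        have hle : ∀ τ, limsup (fun n => g n τ) atTop ≤ A * M τ := by
          intro τ
          have hmapeq : limsup (fun n => g n τ) atTop
              = limsup (fun r => I k r τ) (Filter.map (fun n => k * R n) atTop) := by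
            rw [limsup, limsup, Filter.map_map]
            rfl
          have hfle : Filter.map (fun n => k * R n) atTop ≤ atTop := hkRtop
          have hcb' : IsCoboundedUnder (· ≤ ·) (Filter.map (fun n => k * R n) atTop)
              (fun r => I k r τ) := by
            apply IsBoundedUnder.isCoboundedUnder_le
            refine isBoundedUnder_of ⟨-B₀, fun r => (abs_le.1 (hB₀ k r τ)).1⟩
          have hbdd' : IsBoundedUnder (· ≤ ·) atTop (fun r : ℝ => I k r τ) :=
            isBoundedUnder_of ⟨B₀, fun r => (abs_le.1 (hB₀ k r τ)).2⟩
          calc limsup (fun n => g n τ) atTop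
              = limsup (fun r => I k r τ) (Filter.map (fun n => k * R n) atTop) := hmapeq
            _ ≤ limsup (fun r => I k r τ) atTop := limsup_le_limsup_of_le hfle hcb' hbdd'
            _ ≤ A * M τ := (hsandwich k hk τ).2
        have hrf := rev_fatou_aux (μ := μ) (g := g) (ψ := fun τ => A * M τ) (B := B')
          (fun n => hImeas k (k * R n)) (hMmeas.const_mul A) hgB hψB hle
        have hrepr : ∀ n, (∫ τ, g n τ ∂μ) = φ (R n) := fun n => by
          show (∫ τ, I k (k * R n) τ ∂(volume.restrict (Set.Ioc s t)))
            = ∫ τ in s..t, I k (k * R n) τ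
          rw [intervalIntegral.integral_of_le hst.le]
        have hL' : L ≤ limsup (fun n => ∫ τ, g n τ ∂μ) atTop := by
          have hbdd2 : IsBoundedUnder (· ≤ ·) atTop (fun n => ∫ τ, g n τ ∂μ) :=
            isBoundedUnder_of ⟨B₀ * (t - s),
              fun n => by rw [hrepr n]; exact (abs_le.1 (hφbd (R n))).2⟩
          refine le_of_forall_pos_le_add fun ε hε => ?_
          have hev : ∀ᶠ n : ℕ in atTop, 1 / ((n : ℝ) + 1) ≤ ε := by
            have : Tendsto (fun n : ℕ => 1 / ((n : ℝ) + 1)) atTop (nhds 0) :=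
              tendsto_one_div_add_atTop_nhds_zero_nat
            exact this.eventually (eventually_le_nhds hε)
          have hfreq2 : ∃ᶠ n : ℕ in atTop, L - ε ≤ (∫ τ, g n τ ∂μ) := by
            refine (hev.mono fun n hn => ?_).frequently
            rw [hrepr n]
            have := hR2 n
            linarith
          have := le_limsup_of_frequently_le hfreq2 hbdd2
          linarith
        have hfinal : (∫ τ, A * M τ ∂μ) = ∫ τ in s..t, A * M τ := by
          rw [intervalIntegral.integral_of_le hst.le, hμ]
        linarith [hL'.trans hrf, hfinal ▸ (hL'.trans hrf)]
      -- combine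
      have hCL : C * L ≤ C * ∫ τ in s..t, A * M τ := mul_le_mul_of_nonneg_left stepB hC.le
      have hconst : (∫ τ in s..t, A * M τ) = A * ∫ τ in s..t, M τ :=
        intervalIntegral.integral_const_mul _ _
      rw [hconst] at hCL
      nlinarith [stepA, hCL]
    -- apply Grönwall iteration
    have hsubset2 : Set.Ioc t₀ t₁ ⊆ Set.Ioo 0 T := fun x hx =>
      ⟨(hF ht₀).1.trans hx.1, lt_of_le_of_lt hx.2 (hF ht₁).2⟩
    have hS : volume (Set.Ioc t₀ t₁ \ F) = 0 :=
      measure_mono_null (Set.diff_subset_diff_left hsubset2) hFfull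
    have hkey' : ∀ t ∈ F ∩ Set.Ioc t₀ t₁,
        M t ≤ A * M t₀ + (C * A) * ∫ τ in t₀..t, M τ := by
      rintro t ⟨htF, ht⟩
      exact key t₀ ht₀ t htF ht.1
    have hgr := gronwall_iterate_aux M hMmeas hMnn t₀ t₁ B₁ (A * M t₀) (C * A) hlt
      (fun t ht => hB₁ t (hsubset2 ht)) (mul_nonneg hA0.le (hMnn t₀))
      (mul_nonneg hC.le hA0.le) F hS hkey' ht₁
    calc M t₁ ≤ (A * M t₀) * Real.exp ((C * A) * (t₁ - t₀)) := hgr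
      _ = A * Real.exp (C * A * (t₁ - t₀)) * M t₀ := by ring
  refine ⟨part1, ?_⟩
  -- k → 1⁺
  have hcont : Tendsto (fun k : ℝ => k ^ Nd * Real.exp (C * k ^ Nd * (t₁ - t₀)) * M t₀)
      (nhdsWithin 1 (Set.Ioi 1)) (nhds ((1 : ℝ) ^ Nd * Real.exp (C * 1 ^ Nd * (t₁ - t₀)) * M t₀)) := by
    have hc : Continuous fun k : ℝ => k ^ Nd * Real.exp (C * k ^ Nd * (t₁ - t₀)) * M t₀ := by
      fun_prop
    exact (hc.tendsto 1).mono_left nhdsWithin_le_nhds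
  have hev : ∀ᶠ k in nhdsWithin (1 : ℝ) (Set.Ioi 1),
      M t₁ ≤ k ^ Nd * Real.exp (C * k ^ Nd * (t₁ - t₀)) * M t₀ :=
    eventually_mem_nhdsWithin.mono fun k hk => part1 k hk
  have := ge_of_tendsto hcont hev
  simpa using this
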